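/- There exists a constant C > 0 such that for every even integer k > 2 and every integer n > 2k, |α(P(n,k)) − (2k−1)n/(2k)| ≤ C·k. -/

import Mathlib

/-!
Call column `i` occupied when `u_i` or `v_i` lies in the independent set; a column holds at most
one chosen vertex. In a run of `2k` occupied columns the outer and inner edges form a Möbius-ladder
system of 2-clauses whose only solution, for even `k`, is an alternating pattern. That pattern
forces the next column to be empty and the inner vertex two columns beyond it to be unchosen. A run
of length `2k` therefore forces every later run to have length at most `2k - 1` until one of length
at most `2k - 2` occurs. So consecutive empty columns are `2k` apart on average, up to one extra
column in total, and `2kα + n ≤ 2kn + 1`. Conversely,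
the alternating pattern repeated with period `2k`, followed by at least `2k` empty columns so
that no edge wraps around, is an independent set of size `(2k - 1)(⌊n/2k⌋ - 1)`.
-/

namespace GP

/-- Adjacency generating relation for the generalized Petersen graph `P(n,k)`:
`Sum.inl i` is the outer vertex `u_i`, `Sum.inr i` is the inner vertex `v_i`. -/
def adjFun (n k : ℕ) : (ZMod n ⊕ ZMod n) → (ZMod n ⊕ ZMod n) → Prop
  | Sum.inl i, Sum.inl j => j = i + 1
  | Sum.inl i, Sum.inr j => j = i
  | Sum.inr i, Sum.inr j => j = i + (k : ZMod n)
  | _, _ => False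

/-- The generalized Petersen graph `P(n,k)`. -/
def P (n k : ℕ) : SimpleGraph (ZMod n ⊕ ZMod n) :=
  SimpleGraph.fromRel (adjFun n k)

/-- `s` is an independent set of vertices in `G`. -/
def IsIndep {V : Type*} (G : SimpleGraph V) (s : Finset V) : Prop :=
  ∀ v ∈ s, ∀ w ∈ s, ¬ G.Adj v w

/-- The independence number of a graph. -/
noncomputable def indepNum {V : Type*} (G : SimpleGraph V) : ℕ :=
  sSup {m | ∃ s : Finset V, IsIndep G s ∧ s.card = m}

/-- `α(P(n,k))`. -/
noncomputable def alpha (n k : ℕ) : ℕ := indepNum (P n k)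

/-- The outer vertex `u_i`. -/
def u (n : ℕ) (i : ZMod n) : ZMod n ⊕ ZMod n := Sum.inl i

/-- The inner vertex `v_i`. -/
def v (n : ℕ) (i : ZMod n) : ZMod n ⊕ ZMod n := Sum.inr i

/-- The `2k`-segment `I_t = {u_t, …, u_{t+2k-1}} ∪ {v_t, …, v_{t+2k-1}}`. -/
def segment (n k : ℕ) (t : ZMod n) : Finset (ZMod n ⊕ ZMod n) :=
  ((Finset.range (2*k)).image fun j : ℕ => u n (t + (j : ZMod n))) ∪
  ((Finset.range (2*k)).image fun j : ℕ => v n (t + (j : ZMod n)))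

theorem forall_even_odd_of_alternate {k : ℕ} {A B : ℕ → Prop}
    (hA : ∀ j, j + 1 < k → A j → B (j + 1))
    (hB : ∀ j, j + 1 < k → B j → A (j + 1)) (h0 : A 0) :
    ∀ j < k, (Even j → A j) ∧ (Odd j → B j) := by
  intro j hj
  induction j with
  | zero => exact ⟨fun _ => h0, fun h => absurd h (by decide)⟩
  | succ j ih =>
    obtain ⟨hev, hodd⟩ := ih (by omega)
    refine ⟨fun he => hB j hj (hodd ?_), fun ho => hA j hj (hev ?_)⟩
    · simpa [Nat.even_add_one] using he
    · simpa [Nat.odd_add_one] using ho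

/-- In a run of `2k` occupied columns starting at `t`, `f i := U (t + i)` satisfies these
clauses: the outer edges give `hsucc`, the inner edges `v_{t+i} v_{t+i+k}` give `hrung`. -/
theorem ladder_iff_even {k : ℕ} (hk : Even k) {f : ℕ → Prop}
    (hsucc : ∀ i, i + 1 < 2 * k → f i → ¬ f (i + 1)) (hrung : ∀ i < k, f i ∨ f (i + k)) :
    ∀ j < k, (f j ↔ Even j) ∧ (f (j + k) ↔ Odd j) := by
  intro j hj
  have hupper : ∀ j, j + 1 < k → f (j + k) → f (j + 1) := fun j hj h =>
    (hrung (j + 1) hj).resolve_right fun h' =>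
      hsucc (j + k) (by omega) h (by rwa [show j + k + 1 = j + 1 + k by omega])
  have hlower : ∀ j, j + 1 < k → f j → f (j + 1 + k) := fun j hj h =>
    (hrung (j + 1) hj).resolve_left (hsucc j (by omega) h)
  have hk0 : ¬ f k := fun h =>
    hsucc (k - 1) (by omega)
      ((forall_even_odd_of_alternate (A := fun j => f (j + k)) hupper hlower (by simpa using h)
        (k - 1) (by omega)).2 (Nat.Even.sub_odd (by omega) hk odd_one))
      (by rwa [show k - 1 + 1 = k by omega])
  have alt := forall_even_odd_of_alternate hlower hupper
    ((hrung 0 (by omega)).resolve_right (by simpa using hk0))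
  rcases Nat.even_or_odd j with he | ho
  · refine ⟨iff_of_true ((alt j hj).1 he) he, iff_of_false ?_ (Nat.not_odd_iff_even.2 he)⟩
    have hj1 : j + 1 < k := by
      obtain ⟨a, rfl⟩ := hk; obtain ⟨b, rfl⟩ := he; omega
    exact fun h => hsucc (j + k) (by omega) h
      (by rw [show j + k + 1 = j + 1 + k by omega]; exact hlower j hj1 ((alt j hj).1 he))
  · refine ⟨iff_of_false (fun h => ?_) (Nat.not_even_iff_odd.2 ho),
      iff_of_true ((alt j hj).2 ho) ho⟩
    obtain ⟨b, rfl⟩ := ho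
    exact hsucc (2 * b) (by omega) ((alt (2 * b) (by omega)).1 (even_two_mul b)) h

/-- An independent set of a generalized Petersen graph read column by column along `ℕ`:
`U x` (resp. `V x`) says that the outer (resp. inner) vertex of column `x` is chosen. -/
structure IsIndepColumns (k : ℕ) (U V : ℕ → Prop) : Prop where
  not_U_succ : ∀ x, U x → ¬ U (x + 1)
  not_U_V : ∀ x, U x → ¬ V x
  not_V_add : ∀ x, V x → ¬ V (x + k)

namespace IsIndepColumns

variable {k : ℕ} {U V : ℕ → Prop}

theorem U_or_U_of_add_eq (h : IsIndepColumns k U V) {x y : ℕ} (hxy : x + k = y)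
    (hx : U x ∨ V x) (hy : U y ∨ V y) : U x ∨ U y := by
  rcases hx with hx | hx
  · exact Or.inl hx
  · exact Or.inr (hy.resolve_right (hxy ▸ h.not_V_add x hx))

theorem gap_of_run (h : IsIndepColumns k U V) (hk : Even k) (hk4 : 4 ≤ k) {t : ℕ}
    (hstart : (U t ∨ V t) ∨ ¬ V (t + 2))
    (hrun : ∀ i, 0 < i → i < 2 * k → U (t + i) ∨ V (t + i)) :
    ¬ (U (t + 2 * k) ∨ V (t + 2 * k)) ∧ ¬ V (t + 2 * k + 2) := by
  have hnot1 : ¬ U (t + 1) := by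
    rcases hstart with hocc | hV2
    · have hocc' : ∀ i < 2 * k, U (t + i) ∨ V (t + i) := fun i hi =>
        (Nat.eq_zero_or_pos i).elim (fun hi0 => hi0 ▸ hocc) (hrun i · hi)
      have := (ladder_iff_even hk (f := fun i => U (t + i)) (fun i _ => h.not_U_succ _)
        (fun i hi => h.U_or_U_of_add_eq (by omega) (hocc' i (by omega)) (hocc' (i + k) (by omega)))
        1 (by omega)).1
      simpa using this
    · exact fun hU1 => h.not_U_succ _ hU1 ((hrun 2 (by omega) (by omega)).resolve_right hV2)
  -- Column `t` now behaves as an outer vertex: the clauses at `t` only need `¬ U (t + 1)`.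
  have hl := ladder_iff_even hk (f := fun i => i = 0 ∨ U (t + i))
    (fun i _ hi => by
      rcases Nat.eq_zero_or_pos i with rfl | hi0
      · simpa using hnot1
      · simpa [← add_assoc] using h.not_U_succ _ (hi.resolve_left hi0.ne'))
    (fun i hi => by
      rcases Nat.eq_zero_or_pos i with rfl | hi0
      · exact Or.inl (Or.inl rfl)
      · exact (h.U_or_U_of_add_eq (by omega) (hrun i hi0 (by omega))
          (hrun (i + k) (by omega) (by omega))).imp Or.inr Or.inr)
  have hU : U (t + (2 * k - 1)) := by
    have := (hl (k - 1) (by omega)).2.2 (Nat.Even.sub_odd (by omega) hk odd_one)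
    rwa [show k - 1 + k = 2 * k - 1 by omega, or_iff_right (by omega)] at this
  have hV : ∀ j, j < k → Even j → V (t + (j + k)) := fun j hj he =>
    (hrun (j + k) (by omega) (by omega)).resolve_left fun hU =>
      Nat.not_odd_iff_even.2 he ((hl j hj).2.1 (Or.inr hU))
  refine ⟨fun hocc => ?_, fun hV' => h.not_V_add _ (hV 2 (by omega) even_two) ?_⟩
  · rcases hocc with hU' | hV'
    · exact h.not_U_succ _ hU (by rwa [show t + (2 * k - 1) + 1 = t + 2 * k by omega])
    · exact h.not_V_add _ (hV 0 (by omega) (by decide))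
        (by rwa [show t + (0 + k) + k = t + 2 * k by omega])
  · rwa [show t + (2 + k) + k = t + 2 * k + 2 by omega]

theorem mono {U' V' : ℕ → Prop} (h : IsIndepColumns k U V)
    (hU : ∀ m, U' m → U m) (hV : ∀ m, V' m → V m) : IsIndepColumns k U' V' where
  not_U_succ x hx hx' := h.not_U_succ x (hU x hx) (hU _ hx')
  not_U_V x hx hx' := h.not_U_V x (hU x hx) (hV x hx')
  not_V_add x hx hx' := h.not_V_add x (hV x hx) (hV _ hx')

end IsIndepColumns

section Counting

open Finset

variable {occ good : ℕ → Prop} {L n : ℕ}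

theorem exists_next_empty (hend : ¬ occ n) {a : ℕ} (ha : a < n) :
    ∃ g, 0 < g ∧ a + g ≤ n ∧ ¬ occ (a + g) ∧ ∀ i, 0 < i → i < g → occ (a + i) := by
  classical
  have hex : ∃ g, 0 < g ∧ ¬ occ (a + g) := ⟨n - a, by omega, by rwa [Nat.add_sub_cancel' ha.le]⟩
  refine ⟨Nat.find hex, (Nat.find_spec hex).1, ?_, (Nat.find_spec hex).2, fun i hi hig => ?_⟩
  · have := Nat.find_min' hex (m := n - a) ⟨by omega, by rwa [Nat.add_sub_cancel' ha.le]⟩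
    omega
  · by_contra hi'
    exact Nat.find_min hex hig ⟨hi, hi'⟩

/-- `good` is a credit: a gap of `L + 1` between consecutive empty columns earns it, and it
forbids the next gap from exceeding `L`. Hence the gaps exceed `L` by at most one in total. -/
theorem sub_le_mul_card_empty [DecidablePred occ] (hL : 0 < L)
    (hrun : ∀ t, occ t ∨ good t → (∀ i, 0 < i → i < L → occ (t + i)) →
      ¬ occ (t + L) ∧ good (t + L))
    (hend : ¬ occ n) (a : ℕ) (ha : a ≤ n) (hocc : ¬ occ a) :
    (n - a ≤ L * #{x ∈ Ico a n | ¬ occ x} + 1) ∧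
      (good a → n - a ≤ L * #{x ∈ Ico a n | ¬ occ x}) := by
  rcases ha.eq_or_lt with rfl | ha
  · simp
  obtain ⟨g, hg0, hgn, hgocc, hgap⟩ := exists_next_empty hend ha
  have ih := sub_le_mul_card_empty hL hrun hend (a + g) hgn hgocc
  have hcard : L * #{x ∈ Ico (a + g) n | ¬ occ x} + L ≤ L * #{x ∈ Ico a n | ¬ occ x} := by
    rw [← Nat.mul_succ]
    refine Nat.mul_le_mul_left _ (card_lt_card ?_)
    refine (ssubset_iff_of_subset (filter_subset_filter _ (Ico_subset_Ico_left (by omega)))).2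
      ⟨a, by simp [ha, hocc], by simp [hg0.ne']⟩
  have hg_le_of_good : good a → g ≤ L := fun hgood => by
    by_contra! hlt
    exact (hrun a (Or.inr hgood) fun i hi hiL => hgap i hi (by omega)).1 (hgap L hL hlt)
  rcases Nat.lt_or_ge L g with hLg | hgL
  · obtain ⟨hempty, hgood⟩ := hrun (a + 1) (Or.inl (hgap 1 one_pos (by omega))) fun i hi hiL => by
      rw [add_assoc, add_comm 1]; exact hgap (i + 1) (by omega) (by omega)
    obtain rfl : g = L + 1 := by
      by_contra hne
      exact hempty (by rw [add_assoc, add_comm 1]; exact hgap (L + 1) (by omega) (by omega))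
    have := ih.2 (by rwa [add_assoc, add_comm 1] at hgood)
    exact ⟨by omega, fun hgood => absurd (hg_le_of_good hgood) (by omega)⟩
  · refine ⟨by omega, fun hgood => ?_⟩
    rcases hgL.lt_or_eq with hlt | rfl
    · omega
    · have := ih.2 (hrun a (Or.inr hgood) hgap).2
      omega
termination_by n - a

end Counting

section Graph

open Finset

variable {n k : ℕ}

theorem natCast_eq_natCast_of_lt {a b : ℕ} (ha : a < n) (hb : b < n)
    (h : (a : ZMod n) = b) : a = b := by
  rwa [ZMod.natCast_eq_natCast_iff', Nat.mod_eq_of_lt ha, Nat.mod_eq_of_lt hb] at h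

theorem natCast_ne_zero_of_lt {a : ℕ} (ha0 : 0 < a) (ha : a < n) : (a : ZMod n) ≠ 0 := by
  rw [Ne, ZMod.natCast_eq_zero_iff]
  exact fun hdvd => (Nat.le_of_dvd ha0 hdvd).not_gt ha

theorem P_adj_u_u {i j : ZMod n} :
    (P n k).Adj (u n i) (u n j) ↔ i ≠ j ∧ (j = i + 1 ∨ i = j + 1) := by
  simp [P, u, adjFun]

theorem P_adj_u_v {i j : ZMod n} : (P n k).Adj (u n i) (v n j) ↔ j = i := by
  simp [P, u, v, adjFun]

theorem P_adj_v_v {i j : ZMod n} :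
    (P n k).Adj (v n i) (v n j) ↔ i ≠ j ∧ (j = i + k ∨ i = j + k) := by
  simp [P, v, adjFun]

end Graph

section UpperBound

open Finset

variable {n k : ℕ} {s : Finset (ZMod n ⊕ ZMod n)}

theorem isIndepColumns_of_isIndep (h1 : (1 : ZMod n) ≠ 0) (hk : (k : ZMod n) ≠ 0)
    (hs : IsIndep (P n k) s) (e : ZMod n) :
    IsIndepColumns k (fun x => u n (e + x) ∈ s) (fun x => v n (e + x) ∈ s) where
  not_U_succ x hx hx' := hs _ hx _ hx' <| P_adj_u_u.2
    ⟨by simpa using h1, Or.inl (by push_cast; ring)⟩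
  not_U_V x hx hx' := hs _ hx _ hx' (P_adj_u_v.2 rfl)
  not_V_add x hx hx' := hs _ hx _ hx' <| P_adj_v_v.2
    ⟨by simpa using hk, Or.inl (by push_cast; ring)⟩

theorem card_le_card_occupied [NeZero n] (hs : IsIndep (P n k) s) :
    s.card ≤ #{i | u n i ∈ s ∨ v n i ∈ s} := by
  refine card_le_card_of_injOn (Sum.elim id id) ?_ ?_
  · rintro (i | i) hi <;>
      simp only [coe_filter, mem_univ, true_and, Set.mem_ofPred_eq, mem_coe] at hi ⊢ <;>
      simp [u, v, hi]
  · rintro (i | i) hi (j | j) hj hij <;> simp only [Sum.elim_inl, Sum.elim_inr, id] at hij <;>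
      subst hij
    · rfl
    · exact absurd (P_adj_u_v.2 rfl) (hs _ hi _ hj)
    · exact absurd (P_adj_u_v.2 rfl) (hs _ hj _ hi)
    · rfl

theorem two_mul_card_add_le (hk : Even k) (hk4 : 4 ≤ k) (hn : 2 * k < n)
    (hs : IsIndep (P n k) s) : 2 * k * s.card + n ≤ 2 * k * n + 1 := by
  have : NeZero n := ⟨by omega⟩
  have hcol := isIndepColumns_of_isIndep
    (by exact_mod_cast natCast_ne_zero_of_lt one_pos (by omega))
    (natCast_ne_zero_of_lt (by omega) (by omega)) hs
  obtain ⟨e, he⟩ : ∃ e, ¬ (u n e ∈ s ∨ v n e ∈ s) := by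
    by_contra! hall
    exact ((hcol 0).gap_of_run hk hk4 (t := 0) (Or.inl (hall _)) fun i _ _ => hall _).1 (hall _)
  have hcount := sub_le_mul_card_empty (occ := fun x => u n (e + x) ∈ s ∨ v n (e + x) ∈ s)
    (good := fun x => v n (e + ↑(x + 2)) ∉ s) (by omega) (fun t => (hcol e).gap_of_run hk hk4)
    (by simpa using he) 0 (Nat.zero_le n) (by simpa using he)
  have hshift : #{x ∈ Ico 0 n | ¬ (u n (e + ((x : ℕ) : ZMod n)) ∈ s ∨ v n (e + x) ∈ s)} ≤
      #{i | ¬ (u n i ∈ s ∨ v n i ∈ s)} := by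
    refine card_le_card_of_injOn (fun x : ℕ => e + x)
      (fun x hx => by simpa using (mem_filter.1 hx).2) ?_
    intro x hx y hy hxy
    simp only [coe_filter, mem_Ico, Set.mem_ofPred_eq] at hx hy
    exact natCast_eq_natCast_of_lt hx.1.2 hy.1.2 (add_left_cancel hxy)
  have hsplit :=
    card_filter_add_card_filter_not (s := univ) (fun i : ZMod n => u n i ∈ s ∨ v n i ∈ s)
  rw [card_univ, ZMod.card] at hsplit
  have := Nat.mul_le_mul_left (2 * k)
    ((add_le_add (card_le_card_occupied hs) hshift).trans_eq hsplit)
  rw [mul_add] at this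
  omega

end UpperBound

section LowerBound

open Finset

variable {n k : ℕ}

/-- Phase `i` of a block of `2k` columns carries an outer (`blockU`) or inner (`blockV`) vertex
as in the pattern of `ladder_iff_even`; phase `0` is the empty column. -/
def blockU (k i : ℕ) : Prop := i % 2 = 0 ∧ 0 < i ∧ i < k ∨ i % 2 = 1 ∧ k < i

def blockV (k i : ℕ) : Prop := i % 2 = 1 ∧ i < k ∨ i % 2 = 0 ∧ k ≤ i

theorem isIndepColumns_block (hk : Even k) (hk0 : 0 < k) :
    IsIndepColumns k (fun m => blockU k ((m + 1) % (2 * k)))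
      (fun m => blockV k ((m + 1) % (2 * k))) := by
  have hk2 := Nat.even_iff.1 hk
  refine ⟨fun m hU hU' => ?_, fun m hU hV => ?_, fun m hV hV' => ?_⟩
  · rw [Nat.add_mod_eq_ite, Nat.mod_eq_of_lt (by omega : 1 < 2 * k)] at hU'
    have := Nat.mod_lt (m + 1) (by omega : 0 < 2 * k)
    generalize (m + 1) % (2 * k) = i at *
    unfold blockU at hU hU'
    split_ifs at hU' <;> omega
  · unfold blockU blockV at *
    omega
  · rw [add_right_comm, Nat.add_mod_eq_ite, Nat.mod_eq_of_lt (by omega : k < 2 * k)] at hV'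
    have := Nat.mod_lt (m + 1) (by omega : 0 < 2 * k)
    generalize (m + 1) % (2 * k) = i at *
    unfold blockV at hV hV'
    split_ifs at hV' <;> omega

def columnSet (n : ℕ) (U V : ℕ → Prop) [DecidablePred U] [DecidablePred V] :
    Finset (ZMod n ⊕ ZMod n) :=
  ({m ∈ range n | U m}.image Nat.cast).disjSum ({m ∈ range n | V m}.image Nat.cast)

variable {U V : ℕ → Prop} [DecidablePred U] [DecidablePred V]

theorem isIndep_columnSet (h : IsIndepColumns k U V) (hU : ∀ m, U m → m + 1 < n)
    (hV : ∀ m, V m → m + k < n) : IsIndep (P n k) (columnSet n U V) := by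
  intro x hx y hy hadj
  simp only [columnSet, mem_disjSum, mem_image, mem_filter, mem_range] at hx hy
  rcases hx with ⟨_, ⟨m, ⟨hm, hUm⟩, rfl⟩, rfl⟩ | ⟨_, ⟨m, ⟨hm, hVm⟩, rfl⟩, rfl⟩ <;>
    rcases hy with ⟨_, ⟨m', ⟨hm', hUm'⟩, rfl⟩, rfl⟩ | ⟨_, ⟨m', ⟨hm', hVm'⟩, rfl⟩, rfl⟩
  · obtain ⟨-, hsucc | hsucc⟩ := P_adj_u_u.1 hadj
    · obtain rfl := natCast_eq_natCast_of_lt hm' (hU m hUm) (by exact_mod_cast hsucc)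
      exact h.not_U_succ m hUm hUm'
    · obtain rfl := natCast_eq_natCast_of_lt hm (hU m' hUm') (by exact_mod_cast hsucc)
      exact h.not_U_succ m' hUm' hUm
  · obtain rfl := natCast_eq_natCast_of_lt hm' hm (P_adj_u_v.1 hadj)
    exact h.not_U_V m' hUm hVm'
  · obtain rfl := natCast_eq_natCast_of_lt hm hm' (P_adj_u_v.1 hadj.symm)
    exact h.not_U_V m hUm' hVm
  · obtain ⟨-, hadd | hadd⟩ := P_adj_v_v.1 hadj
    · obtain rfl := natCast_eq_natCast_of_lt hm' (hV m hVm) (by exact_mod_cast hadd)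
      exact h.not_V_add m hVm hVm'
    · obtain rfl := natCast_eq_natCast_of_lt hm (hV m' hVm') (by exact_mod_cast hadd)
      exact h.not_V_add m' hVm' hVm

theorem card_columnSet (h : ∀ m, U m → ¬ V m) :
    (columnSet n U V).card = #{m ∈ range n | U m ∨ V m} := by
  have hinj : Set.InjOn (Nat.cast : ℕ → ZMod n) (range n) := fun a ha b hb =>
    natCast_eq_natCast_of_lt (mem_range.1 ha) (mem_range.1 hb)
  rw [columnSet, card_disjSum, card_image_of_injOn (hinj.mono (coe_subset.2 (filter_subset _ _))),
    card_image_of_injOn (hinj.mono (coe_subset.2 (filter_subset _ _))),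
    filter_or, card_union_of_disjoint (disjoint_filter.2 fun m _ => h m)]

theorem exists_isIndep_card_eq (hk : Even k) (hk0 : 0 < k) (hn : 2 * k ≤ n) :
    ∃ s, IsIndep (P n k) s ∧ s.card = (2 * k - 1) * (n / (2 * k) - 1) := by
  classical
  set b := n / (2 * k)
  have hb : 1 ≤ b := (Nat.le_div_iff_mul_le (by omega)).2 (by omega)
  have hL : 2 * k * (b - 1) + 2 * k ≤ n := by
    rw [Nat.mul_sub_one, Nat.sub_add_cancel (Nat.le_mul_of_pos_right _ hb)]
    exact Nat.mul_div_le n (2 * k)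
  -- The last `n - 2k(b - 1) ≥ 2k` columns stay empty, so that no edge wraps around.
  let U m := m < 2 * k * (b - 1) ∧ blockU k ((m + 1) % (2 * k))
  let V m := m < 2 * k * (b - 1) ∧ blockV k ((m + 1) % (2 * k))
  have hcol : IsIndepColumns k U V :=
    (isIndepColumns_block hk hk0).mono (fun _ hm => hm.2) (fun _ hm => hm.2)
  refine ⟨columnSet n U V, isIndep_columnSet hcol (fun m hm => by have := hm.1; omega)
    (fun m hm => by have := hm.1; omega), ?_⟩
  have hocc : {m ∈ range n | U m ∨ V m} = {m ∈ range (2 * k * (b - 1)) | ¬ 2 * k ∣ m + 1} := by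
    ext m
    have := Nat.mod_lt (m + 1) (by omega : 0 < 2 * k)
    simp only [mem_filter, mem_range, Nat.dvd_iff_mod_eq_zero, U, V]
    generalize (m + 1) % (2 * k) = i at *
    unfold blockU blockV
    have := Nat.even_iff.1 hk
    omega
  have hsplit := card_filter_add_card_filter_not (s := range (2 * k * (b - 1))) (2 * k ∣ · + 1)
  rw [Nat.card_multiples, Nat.mul_div_cancel_left _ (by omega), card_range] at hsplit
  rw [card_columnSet hcol.not_U_V, hocc, Nat.sub_one_mul]
  omega

end LowerBound

section IndepNum

variable {V : Type*} [Fintype V] {G : SimpleGraph V}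

theorem bddAbove_card_isIndep : BddAbove {m | ∃ s : Finset V, IsIndep G s ∧ s.card = m} :=
  ⟨Fintype.card V, by rintro _ ⟨s, -, rfl⟩; exact s.card_le_univ⟩

theorem card_le_indepNum {s : Finset V} (hs : IsIndep G s) : s.card ≤ indepNum G :=
  le_csSup bddAbove_card_isIndep ⟨s, hs, rfl⟩

theorem exists_isIndep_card_eq_indepNum (G : SimpleGraph V) :
    ∃ s, IsIndep G s ∧ s.card = indepNum G :=
  Nat.sSup_mem (s := {m | ∃ s : Finset V, IsIndep G s ∧ s.card = m}) ⟨0, ∅, by simp [IsIndep], rfl⟩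
    bddAbove_card_isIndep

end IndepNum

variable {n k : ℕ}

theorem two_mul_alpha_add_le (hk : Even k) (hk4 : 4 ≤ k) (hn : 2 * k < n) :
    2 * k * alpha n k + n ≤ 2 * k * n + 1 := by
  have : NeZero n := ⟨by omega⟩
  obtain ⟨s, hs, hcard⟩ := exists_isIndep_card_eq_indepNum (P n k)
  rw [alpha, ← hcard]
  exact two_mul_card_add_le hk hk4 hn hs

theorem le_alpha (hk : Even k) (hk0 : 0 < k) (hn : 2 * k ≤ n) :
    (2 * k - 1) * (n / (2 * k) - 1) ≤ alpha n k := by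
  have : NeZero n := ⟨by omega⟩
  obtain ⟨s, hs, hcard⟩ := exists_isIndep_card_eq hk hk0 hn
  exact hcard ▸ card_le_indepNum hs

/-- There is a constant `C > 0` such that for every even `k > 2` and
every `n > 2k`, `|α(P(n,k)) − (2k−1)n/(2k)| ≤ C·k`. -/
theorem alpha_asymptotics :
    ∃ C : ℝ, 0 < C ∧ ∀ n k : ℕ, Even k → 2 < k → 2 * k < n →
      |(alpha n k : ℝ) - (2 * (k : ℝ) - 1) * n / (2 * k)| ≤ C * k := by
  refine ⟨4, by norm_num, fun n k hk hk2 hn => ?_⟩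
  have hk4 : 4 ≤ k := by obtain ⟨m, rfl⟩ := hk; omega
  have hupper := two_mul_alpha_add_le hk hk4 hn
  have hlower := le_alpha hk (by omega) hn.le
  have hb := Nat.lt_mul_div_succ n (by omega : 0 < 2 * k)
  have hb1 : 1 ≤ n / (2 * k) := (Nat.le_div_iff_mul_le (by omega)).2 (by omega)
  set b := n / (2 * k)
  have hupper' : 2 * (k : ℝ) * alpha n k + n ≤ 2 * k * n + 1 := by exact_mod_cast hupper
  have hlower' : (((2 * k - 1) * (b - 1) : ℕ) : ℝ) ≤ alpha n k := by exact_mod_cast hlower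
  push_cast [Nat.cast_sub hb1, Nat.cast_sub (by omega : 1 ≤ 2 * k)] at hlower'
  have hb' : (n : ℝ) < 2 * k * (b + 1) := by exact_mod_cast hb
  have hk' : (4 : ℝ) ≤ k := by exact_mod_cast hk4
  have hk0 : (0 : ℝ) < 2 * k := by positivity
  rw [show (alpha n k : ℝ) - (2 * k - 1) * n / (2 * k) =
      (2 * k * alpha n k - (2 * k - 1) * n) / (2 * k) by field_simp,
    abs_div, abs_of_pos hk0, div_le_iff₀ hk0, abs_le]
  constructor <;> nlinarith

end GP
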